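/- arXiv:1506.00876 — 3 statements merged into one kernel-verified Lean document; each statement's English description precedes it below -/
import Mathlib

section
/- Let I = [x_1, y_1] and J = [x_2, y_2] be nondegenerate closed intervals, let A ⊆ I and B ⊆ J be totally disconnected closed subsets with x_1, y_1 ∈ A and x_2, y_2 ∈ B, and let τ : A → B be a strictly increasing bijection. Then there exists a strictly increasing homeomorphism h : I → J such that h(a) = τ(a) for every a ∈ A. (For instance, extend τ affinely on the closure of each component of I \ A.) -/
open Set

namespace Stmt11

noncomputable def ga (A : Set ℝ) (x : ℝ) : ℝ := sSup (A ∩ Iic x)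
noncomputable def gb (A : Set ℝ) (x : ℝ) : ℝ := sInf (A ∩ Ici x)

open Classical in
noncomputable def ext (A : Set ℝ) (τ : ℝ → ℝ) (x : ℝ) : ℝ :=
  if x ∈ A then τ x
  else τ (ga A x) + (x - ga A x) * (τ (gb A x) - τ (ga A x)) / (gb A x - ga A x)

variable {x₁ y₁ : ℝ} {A : Set ℝ}

lemma ga_spec (hAcl : IsClosed A) (hAsub : A ⊆ Icc x₁ y₁) (hx₁ : x₁ ∈ A)
    {x : ℝ} (hx : x ∈ Icc x₁ y₁) : ga A x ∈ A ∧ ga A x ≤ x := by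
  have hne : (A ∩ Iic x).Nonempty := ⟨x₁, hx₁, hx.1⟩
  have hbdd : BddAbove (A ∩ Iic x) := ⟨x, fun y hy => hy.2⟩
  have hcl : IsClosed (A ∩ Iic x) := hAcl.inter isClosed_Iic
  have hmem := hcl.csSup_mem hne hbdd
  exact ⟨hmem.1, hmem.2⟩

lemma gb_spec (hAcl : IsClosed A) (hAsub : A ⊆ Icc x₁ y₁) (hy₁ : y₁ ∈ A)
    {x : ℝ} (hx : x ∈ Icc x₁ y₁) : gb A x ∈ A ∧ x ≤ gb A x := by
  have hne : (A ∩ Ici x).Nonempty := ⟨y₁, hy₁, hx.2⟩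
  have hbdd : BddBelow (A ∩ Ici x) := ⟨x, fun y hy => hy.2⟩
  have hcl : IsClosed (A ∩ Ici x) := hAcl.inter isClosed_Ici
  have hmem := hcl.csInf_mem hne hbdd
  exact ⟨hmem.1, hmem.2⟩

lemma ga_le (hAcl : IsClosed A) {a x : ℝ} (ha : a ∈ A) (hax : a ≤ x) : a ≤ ga A x :=
  le_csSup ⟨x, fun y hy => hy.2⟩ ⟨ha, hax⟩

lemma le_gb (hAcl : IsClosed A) {a x : ℝ} (ha : a ∈ A) (hax : x ≤ a) : gb A x ≤ a :=
  csInf_le ⟨x, fun y hy => hy.2⟩ ⟨ha, hax⟩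

lemma ga_eq_self {x : ℝ} (hx : x ∈ A) : ga A x = x :=
  le_antisymm (csSup_le ⟨x, hx, le_refl x⟩ fun y hy => hy.2)
    (le_csSup ⟨x, fun y hy => hy.2⟩ ⟨hx, le_refl x⟩)

lemma gb_eq_self {x : ℝ} (hx : x ∈ A) : gb A x = x :=
  le_antisymm (csInf_le ⟨x, fun y hy => hy.2⟩ ⟨hx, le_refl x⟩)
    (le_csInf ⟨x, hx, le_refl x⟩ fun y hy => hy.2)

lemma gap_spec (hAcl : IsClosed A) (hAsub : A ⊆ Icc x₁ y₁) (hx₁ : x₁ ∈ A) (hy₁ : y₁ ∈ A)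
    {x : ℝ} (hx : x ∈ Icc x₁ y₁) (hxA : x ∉ A) :
    ga A x < x ∧ x < gb A x ∧ ∀ a ∈ A, ¬(ga A x < a ∧ a < gb A x) := by
  obtain ⟨hga, hgale⟩ := ga_spec hAcl hAsub hx₁ hx
  obtain ⟨hgb, hgble⟩ := gb_spec hAcl hAsub hy₁ hx
  refine ⟨lt_of_le_of_ne hgale (fun h => hxA (h ▸ hga)),
    lt_of_le_of_ne hgble (fun h => hxA (h ▸ hgb)), fun a ha ⟨h1, h2⟩ => ?_⟩
  rcases le_or_gt a x with h | h
  · exact absurd (ga_le hAcl ha h) (not_le.2 h1)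
  · exact absurd (le_gb hAcl ha h.le) (not_le.2 h2)

/-- characterization of the gap around a point -/
lemma gap_char (hAcl : IsClosed A) {a b x : ℝ} (ha : a ∈ A) (hb : b ∈ A)
    (hax : a < x) (hxb : x < b) (hgap : ∀ c ∈ A, ¬(a < c ∧ c < b)) :
    ga A x = a ∧ gb A x = b ∧ x ∉ A := by
  have hxA : x ∉ A := fun hx => hgap x hx ⟨hax, hxb⟩
  constructor
  · refine le_antisymm (csSup_le ⟨a, ha, hax.le⟩ ?_) (ga_le hAcl ha hax.le)
    rintro c ⟨hcA, hcx⟩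
    by_contra h
    exact hgap c hcA ⟨not_le.1 h, lt_of_le_of_lt hcx hxb⟩
  constructor
  · refine le_antisymm (le_gb hAcl hb hxb.le) (le_csInf ⟨b, hb, hxb.le⟩ ?_)
    rintro c ⟨hcA, hcx⟩
    by_contra h
    exact hgap c hcA ⟨lt_of_lt_of_le hax hcx, not_le.1 h⟩
  · exact hxA

lemma ext_bounds (hAcl : IsClosed A) (hAsub : A ⊆ Icc x₁ y₁) (hx₁ : x₁ ∈ A) (hy₁ : y₁ ∈ A)
    {τ : ℝ → ℝ} (hτmono : StrictMonoOn τ A)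
    {x : ℝ} (hx : x ∈ Icc x₁ y₁) (hxA : x ∉ A) :
    τ (ga A x) < ext A τ x ∧ ext A τ x < τ (gb A x) := by
  obtain ⟨h1, h2, _⟩ := gap_spec hAcl hAsub hx₁ hy₁ hx hxA
  have hga := (ga_spec hAcl hAsub hx₁ hx).1
  have hgb := (gb_spec hAcl hAsub hy₁ hx).1
  have hτ : τ (ga A x) < τ (gb A x) := hτmono hga hgb (h1.trans h2)
  rw [ext, if_neg hxA]
  constructor
  · nlinarith [div_pos (mul_pos (sub_pos.2 h1) (sub_pos.2 hτ)) (sub_pos.2 (h1.trans h2))]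
  · have key : (x - ga A x) * (τ (gb A x) - τ (ga A x)) / (gb A x - ga A x)
        < τ (gb A x) - τ (ga A x) := by
      rw [div_lt_iff₀ (by linarith)]
      nlinarith
    linarith

lemma ext_strictMonoOn (hAcl : IsClosed A) (hAsub : A ⊆ Icc x₁ y₁) (hx₁ : x₁ ∈ A) (hy₁ : y₁ ∈ A)
    {τ : ℝ → ℝ} (hτmono : StrictMonoOn τ A) :
    StrictMonoOn (ext A τ) (Icc x₁ y₁) := by
  intro x hx y hy hxy
  by_cases hxA : x ∈ A <;> by_cases hyA : y ∈ A
  · rw [ext, if_pos hxA, ext, if_pos hyA]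
    exact hτmono hxA hyA hxy
  · -- x ∈ A, y ∉ A
    have hb := ext_bounds hAcl hAsub hx₁ hy₁ hτmono hy hyA
    have hga := (ga_spec hAcl hAsub hx₁ hy).1
    have hle : x ≤ ga A y := ga_le hAcl hxA hxy.le
    calc ext A τ x = τ x := by rw [ext, if_pos hxA]
    _ ≤ τ (ga A y) := hτmono.monotoneOn hxA hga hle
    _ < ext A τ y := hb.1
  · -- x ∉ A, y ∈ A
    have hb := ext_bounds hAcl hAsub hx₁ hy₁ hτmono hx hxA
    have hgb := (gb_spec hAcl hAsub hy₁ hx).1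
    have hle : gb A x ≤ y := le_gb hAcl hyA hxy.le
    calc ext A τ x < τ (gb A x) := hb.2
    _ ≤ τ y := hτmono.monotoneOn hgb hyA hle
    _ = ext A τ y := by rw [ext, if_pos hyA]
  · -- both not in A
    obtain ⟨hx1, hx2, hxgap⟩ := gap_spec hAcl hAsub hx₁ hy₁ hx hxA
    obtain ⟨hy1, hy2, hygap⟩ := gap_spec hAcl hAsub hx₁ hy₁ hy hyA
    have hgax := (ga_spec hAcl hAsub hx₁ hx).1
    have hgbx := (gb_spec hAcl hAsub hy₁ hx).1
    have hgay := (ga_spec hAcl hAsub hx₁ hy).1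
    rcases lt_or_ge y (gb A x) with h | h
    · -- same gap
      obtain ⟨he1, he2, _⟩ := gap_char hAcl hgax hgbx (hx1.trans hxy) h hxgap
      have hτ : τ (ga A x) < τ (gb A x) := hτmono hgax hgbx (hx1.trans hx2)
      rw [ext, if_neg hxA, ext, if_neg hyA, he1, he2]
      have hs : 0 < (τ (gb A x) - τ (ga A x)) / (gb A x - ga A x) :=
        div_pos (sub_pos.2 hτ) (sub_pos.2 (hx1.trans hx2))
      have : (x - ga A x) * ((τ (gb A x) - τ (ga A x)) / (gb A x - ga A x))
           < (y - ga A x) * ((τ (gb A x) - τ (ga A x)) / (gb A x - ga A x)) :=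
        mul_lt_mul_of_pos_right (by linarith) hs
      rw [mul_div_assoc, mul_div_assoc] at *
      linarith
    · -- different gaps
      have hbx := ext_bounds hAcl hAsub hx₁ hy₁ hτmono hx hxA
      have hby := ext_bounds hAcl hAsub hx₁ hy₁ hτmono hy hyA
      have hle : gb A x ≤ ga A y := ga_le hAcl hgbx h
      calc ext A τ x < τ (gb A x) := hbx.2
      _ ≤ τ (ga A y) := hτmono.monotoneOn hgbx hgay hle
      _ < ext A τ y := hby.1

end Stmt11

namespace Stmt11

lemma ext_surj {x₁ y₁ x₂ y₂ : ℝ} {A B : Set ℝ} {τ : ℝ → ℝ}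
    (hAcl : IsClosed A) (hAsub : A ⊆ Icc x₁ y₁) (hx₁ : x₁ ∈ A) (hy₁ : y₁ ∈ A)
    (hBcl : IsClosed B) (hBsub : B ⊆ Icc x₂ y₂) (hx₂ : x₂ ∈ B) (hy₂ : y₂ ∈ B)
    (hτmono : StrictMonoOn τ A) (hτbij : Set.BijOn τ A B)
    {z : ℝ} (hz : z ∈ Icc x₂ y₂) : ∃ x ∈ Icc x₁ y₁, ext A τ x = z := by
  by_cases hzB : z ∈ B
  · obtain ⟨a, haA, hae⟩ := hτbij.surjOn hzB
    exact ⟨a, hAsub haA, by rw [ext, if_pos haA, hae]⟩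
  · have hc := ga_spec hBcl hBsub hx₂ hz
    have hd := gb_spec hBcl hBsub hy₂ hz
    obtain ⟨hc1, hc2, hgapB⟩ := gap_spec hBcl hBsub hx₂ hy₂ hz hzB
    obtain ⟨a, haA, hae⟩ := hτbij.surjOn hc.1
    obtain ⟨b, hbA, hbe⟩ := hτbij.surjOn hd.1
    have hab : a < b := by
      rcases lt_trichotomy a b with h | h | h
      · exact h
      · exfalso; rw [h, hbe] at hae; linarith
      · have := hτmono hbA haA h; rw [hae, hbe] at this; linarith
    have hgapA : ∀ p ∈ A, ¬(a < p ∧ p < b) := by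
      rintro p hpA ⟨hp1, hp2⟩
      have h1 : ga B z < τ p := by rw [← hae]; exact hτmono haA hpA hp1
      have h2 : τ p < gb B z := by rw [← hbe]; exact hτmono hpA hbA hp2
      exact hgapB (τ p) (hτbij.mapsTo hpA) ⟨h1, h2⟩
    set x := a + (z - ga B z) * (b - a) / (gb B z - ga B z) with hxdef
    have hdc : (0:ℝ) < gb B z - ga B z := by linarith
    have hba : (0:ℝ) < b - a := by linarith
    have hax : a < x := by
      have : 0 < (z - ga B z) * (b - a) / (gb B z - ga B z) :=
        div_pos (mul_pos (by linarith) hba) hdc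
      rw [hxdef]; linarith
    have hxb : x < b := by
      have : (z - ga B z) * (b - a) / (gb B z - ga B z) < b - a := by
        rw [div_lt_iff₀ hdc]; nlinarith
      rw [hxdef]; linarith
    obtain ⟨hga, hgb, hxA⟩ := gap_char hAcl haA hbA hax hxb hgapA
    refine ⟨x, ⟨le_trans (hAsub haA).1 hax.le, le_trans hxb.le (hAsub hbA).2⟩, ?_⟩
    rw [ext, if_neg hxA, hga, hgb, hae, hbe, hxdef]
    field_simp
    ring

end Stmt11

open Stmt11 in
/-- a strictly increasing bijection `τ : A → B` between totally
disconnected closed subsets (containing the endpoints) of nondegenerate closed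
intervals `I = [x₁, y₁]`, `J = [x₂, y₂]` extends to a strictly increasing
homeomorphism `h : I → J` with `h a = τ a` for all `a ∈ A`. -/
theorem stmt_11
    (x₁ y₁ x₂ y₂ : ℝ) (h₁ : x₁ < y₁) (h₂ : x₂ < y₂)
    (A B : Set ℝ)
    (hAcl : IsClosed A) (hAtd : IsTotallyDisconnected A)
    (hAsub : A ⊆ Set.Icc x₁ y₁) (hx₁ : x₁ ∈ A) (hy₁ : y₁ ∈ A)
    (hBcl : IsClosed B) (hBtd : IsTotallyDisconnected B)
    (hBsub : B ⊆ Set.Icc x₂ y₂) (hx₂ : x₂ ∈ B) (hy₂ : y₂ ∈ B)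
    (τ : ℝ → ℝ) (hτmono : StrictMonoOn τ A) (hτbij : Set.BijOn τ A B) :
    ∃ h : Set.Icc x₁ y₁ ≃ₜ Set.Icc x₂ y₂,
      StrictMono h ∧ ∀ a : ℝ, (ha : a ∈ A) → ((h ⟨a, hAsub ha⟩ : ℝ) = τ a) := by
  have hmono := ext_strictMonoOn hAcl hAsub hx₁ hy₁ hτmono
  have hτx₁ : τ x₁ = x₂ := by
    obtain ⟨a, haA, hae⟩ := hτbij.surjOn hx₂
    rcases eq_or_lt_of_le (hAsub haA).1 with h | h
    · rw [← h] at hae; exact hae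
    · have h1 := hτmono hx₁ haA h
      have h2 := (hBsub (hτbij.mapsTo hx₁)).1
      rw [hae] at h1; linarith
  have hτy₁ : τ y₁ = y₂ := by
    obtain ⟨a, haA, hae⟩ := hτbij.surjOn hy₂
    rcases eq_or_lt_of_le (hAsub haA).2 with h | h
    · rw [h] at hae; exact hae
    · have h1 := hτmono haA hy₁ h
      have h2 := (hBsub (hτbij.mapsTo hy₁)).2
      rw [hae] at h1; linarith
  have hext1 : ext A τ x₁ = x₂ := by rw [Stmt11.ext, if_pos hx₁, hτx₁]
  have hext2 : ext A τ y₁ = y₂ := by rw [Stmt11.ext, if_pos hy₁, hτy₁]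
  have hmaps : ∀ x ∈ Set.Icc x₁ y₁, ext A τ x ∈ Set.Icc x₂ y₂ := by
    intro x hx
    constructor
    · rw [← hext1]
      exact hmono.monotoneOn (Set.left_mem_Icc.2 h₁.le) hx hx.1
    · rw [← hext2]
      exact hmono.monotoneOn hx (Set.right_mem_Icc.2 h₁.le) hx.2
  set f : Set.Icc x₁ y₁ → Set.Icc x₂ y₂ := fun x => ⟨ext A τ x, hmaps x x.2⟩ with hfdef
  have hf : StrictMono f := fun a b hab =>
    Subtype.mk_lt_mk.2 (hmono a.2 b.2 (Subtype.coe_lt_coe.2 hab))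
  have hsurj : Function.Surjective f := by
    intro z
    obtain ⟨x, hx, hext⟩ := ext_surj hAcl hAsub hx₁ hy₁ hBcl hBsub hx₂ hy₂ hτmono hτbij z.2
    exact ⟨⟨x, hx⟩, Subtype.ext hext⟩
  set e := StrictMono.orderIsoOfSurjective f hf hsurj with hedef
  refine ⟨e.toHomeomorph, ?_, ?_⟩
  · have : ⇑e.toHomeomorph = f := by
      rw [OrderIso.coe_toHomeomorph, hedef, StrictMono.coe_orderIsoOfSurjective]
    rw [this]; exact hf
  · intro a ha
    have : ⇑e.toHomeomorph = f := by
      rw [OrderIso.coe_toHomeomorph, hedef, StrictMono.coe_orderIsoOfSurjective]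
    rw [this]
    show ext A τ a = τ a
    rw [Stmt11.ext, if_pos ha]
end

section
/- Let A ⊆ I and B ⊆ J be closed subsets of closed intervals in ℝ containing the endpoints of their intervals, and let τ : A → B be a strictly increasing bijection. If (a_1, a_2) is a connected component of I \ A with a_1, a_2 ∈ A, then (τ(a_1), τ(a_2)) is a connected component of J \ B. -/
/-- if `τ : A → B` is a strictly increasing bijection between closed
subsets of closed intervals containing the endpoints, and `(a₁, a₂)` is a connected
component of `I \ A` (with `a₁, a₂ ∈ A`), then `(τ a₁, τ a₂)` is a connected
component of `J \ B`. -/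
theorem stmt_12
    (x₁ y₁ x₂ y₂ : ℝ) (h₁ : x₁ < y₁) (h₂ : x₂ < y₂)
    (A B : Set ℝ) (hAcl : IsClosed A) (hBcl : IsClosed B)
    (hAsub : A ⊆ Set.Icc x₁ y₁) (hx₁ : x₁ ∈ A) (hy₁ : y₁ ∈ A)
    (hBsub : B ⊆ Set.Icc x₂ y₂) (hx₂ : x₂ ∈ B) (hy₂ : y₂ ∈ B)
    (τ : ℝ → ℝ) (hτmono : StrictMonoOn τ A) (hτbij : Set.BijOn τ A B)
    (a₁ a₂ : ℝ) (ha₁ : a₁ ∈ A) (ha₂ : a₂ ∈ A) (ha : a₁ < a₂)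
    (hcomp : Set.Ioo a₁ a₂ ⊆ Set.Icc x₁ y₁ \ A) :
    τ a₁ ∈ B ∧ τ a₂ ∈ B ∧ τ a₁ < τ a₂ ∧
      Set.Ioo (τ a₁) (τ a₂) ⊆ Set.Icc x₂ y₂ \ B := by
  have hb1 : τ a₁ ∈ B := hτbij.mapsTo ha₁
  have hb2 : τ a₂ ∈ B := hτbij.mapsTo ha₂
  refine ⟨hb1, hb2, hτmono ha₁ ha₂ ha, fun b hb => ?_⟩
  refine ⟨⟨le_trans (hBsub hb1).1 hb.1.le, le_trans hb.2.le (hBsub hb2).2⟩, fun hbB => ?_⟩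
  obtain ⟨a, haA, rfl⟩ := hτbij.surjOn hbB
  rcases lt_trichotomy a a₁ with h | h | h
  · exact absurd (hτmono haA ha₁ h) (not_lt.mpr hb.1.le)
  · exact lt_irrefl _ (h ▸ hb.1)
  rcases lt_trichotomy a a₂ with h' | h' | h'
  · exact (hcomp ⟨h, h'⟩).2 haA
  · exact lt_irrefl _ (h' ▸ hb.2)
  · exact absurd (hτmono ha₂ haA h') (not_lt.mpr hb.2.le)
end

section
/- Let {I_n, f_n} and {J_n, g_n} be two inverse sequences of closed intervals and single-valued quasi Markov bonding functions f_n : I_{n+1} → I_n and g_n : J_{n+1} → J_n that follow the same pattern. Then varprojlim{I_n, f_n} and varprojlim{J_n, g_n} are homeomorphic. -/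
/-!
Each τₙ extends to an increasing homeomorphism hₙ : Iₙ → Jₙ with gₙ ∘ hₙ₊₁ = hₙ ∘ fₙ, and then
(pₙ) ↦ (hₙ pₙ) is a homeomorphism of the inverse limits. Off Aₙ the map hₙ is built gap by gap:
h₀ is affine on each gap (a, b) of A₀. On a gap (a, b) of Aₙ₊₁, fₙ is an increasing or decreasing
bijection onto the open interval between its one-sided limits c, d ∈ Aₙ, and gₙ maps the gap
(τ a, τ b) of Bₙ₊₁ onto the interval between τ c = hₙ c and τ d = hₙ d. As hₙ is increasing,
gₙ has the same orientation as fₙ there, so hₙ₊₁ := gₙ⁻¹ ∘ hₙ ∘ fₙ maps (a, b) increasingly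
onto (τ a, τ b). Since τₙ₊₁ maps the gaps of Aₙ₊₁ exactly onto those of Bₙ₊₁, these pieces glue
with τₙ₊₁ to an increasing bijection Iₙ₊₁ → Jₙ₊₁.
-/

/-- `(A₁, A₂)` is a Markov pair for the (single-valued, not necessarily continuous)
function `f : [x₁,y₁] → [x₂,y₂]`. -/
def MarkovPair (x₁ y₁ x₂ y₂ : ℝ) (f : ℝ → ℝ) (A₁ A₂ : Set ℝ) : Prop :=
  IsClosed A₁ ∧ IsTotallyDisconnected A₁ ∧ A₁ ⊆ Set.Icc x₁ y₁ ∧ x₁ ∈ A₁ ∧ y₁ ∈ A₁ ∧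
  IsClosed A₂ ∧ IsTotallyDisconnected A₂ ∧ A₂ ⊆ Set.Icc x₂ y₂ ∧ x₂ ∈ A₂ ∧ y₂ ∈ A₂ ∧
  Set.MapsTo f A₁ A₂ ∧
  ∀ a b : ℝ, a ∈ A₁ → b ∈ A₁ → a < b → Set.Ioo a b ⊆ Set.Icc x₁ y₁ \ A₁ →
    ContinuousOn f (Set.Ioo a b) ∧
    (StrictMonoOn f (Set.Ioo a b) ∨ StrictAntiOn f (Set.Ioo a b)) ∧
    (∃ c ∈ A₂, Filter.Tendsto f (nhdsWithin a (Set.Ioi a)) (nhds c)) ∧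
    (∃ c ∈ A₂, Filter.Tendsto f (nhdsWithin b (Set.Iio b)) (nhds c))

/-- The inverse sequences `{[x n, y n], f n}` and `{[u n, v n], g n}` of quasi Markov
functions follow the same pattern with respect to `(A n)` and `(B n)`. -/
def FollowSamePattern (x y u v : ℕ → ℝ) (f g : ℕ → ℝ → ℝ) (A B : ℕ → Set ℝ) : Prop :=
  (∀ n, MarkovPair (x (n+1)) (y (n+1)) (x n) (y n) (f n) (A (n+1)) (A n)) ∧
  (∀ n, MarkovPair (u (n+1)) (v (n+1)) (u n) (v n) (g n) (B (n+1)) (B n)) ∧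
  ∃ τ φ ψ : ℕ → ℝ → ℝ,
    StrictMonoOn (τ 0) (A 0) ∧ Set.BijOn (τ 0) (A 0) (B 0) ∧
    (∀ n, StrictMonoOn (φ n) (A (n+1)) ∧ Set.BijOn (φ n) (A (n+1)) (A n)) ∧
    (∀ n, StrictMonoOn (ψ n) (B (n+1)) ∧ Set.BijOn (ψ n) (B (n+1)) (B n)) ∧
    (∀ n, Set.MapsTo (τ (n+1)) (A (n+1)) (B (n+1))) ∧
    (∀ n, ∀ a ∈ A (n+1), ψ n (τ (n+1) a) = τ n (φ n a)) ∧
    (∀ n, ∀ a ∈ A (n+1), ∀ t ∈ A n, (f n a = t ↔ g n (τ (n+1) a) = τ n t)) ∧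
    (∀ n, ∀ a b : ℝ, a ∈ A (n+1) → b ∈ A (n+1) → a < b →
      Set.Ioo a b ⊆ Set.Icc (x (n+1)) (y (n+1)) \ A (n+1) →
      ∀ c ∈ A n,
        (Filter.Tendsto (f n) (nhdsWithin a (Set.Ioi a)) (nhds c) ↔
          Filter.Tendsto (g n) (nhdsWithin (τ (n+1) a) (Set.Ioi (τ (n+1) a))) (nhds (τ n c))) ∧
        (Filter.Tendsto (f n) (nhdsWithin b (Set.Iio b)) (nhds c) ↔
          Filter.Tendsto (g n) (nhdsWithin (τ (n+1) b) (Set.Iio (τ (n+1) b))) (nhds (τ n c))))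


open Set Filter Topology

section Gap

variable {α β : Type*} [LinearOrder α] {A : Set α} {a b a' b' p q : α}

structure IsGap (A : Set α) (a b : α) : Prop where
  left_mem : a ∈ A
  right_mem : b ∈ A
  lt : a < b
  disjoint : Disjoint (Ioo a b) A

namespace IsGap

theorem notMem (h : IsGap A a b) (hp : p ∈ Ioo a b) : p ∉ A :=
  h.disjoint.notMem_of_mem_left hp

theorem le_left_of_lt (h : IsGap A a b) (hq : q ∈ A) (hqp : q < p) (hp : p ∈ Ioo a b) : q ≤ a :=
  not_lt.1 fun haq => h.notMem ⟨haq, hqp.trans hp.2⟩ hq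

theorem right_le_of_lt (h : IsGap A a b) (hq : q ∈ A) (hpq : p < q) (hp : p ∈ Ioo a b) : b ≤ q :=
  not_lt.1 fun hqb => h.notMem ⟨hp.1.trans hpq, hqb⟩ hq

theorem eq_of_mem_Ioo (h : IsGap A a b) (h' : IsGap A a' b') (hp : p ∈ Ioo a b)
    (hp' : p ∈ Ioo a' b') : a = a' ∧ b = b' :=
  ⟨le_antisymm (h'.le_left_of_lt h.left_mem hp.1 hp') (h.le_left_of_lt h'.left_mem hp'.1 hp),
    le_antisymm (h.right_le_of_lt h'.right_mem hp'.2 hp) (h'.right_le_of_lt h.right_mem hp.2 hp')⟩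

theorem Ioo_subset_diff {x y : α} (h : IsGap A a b) (hA : A ⊆ Icc x y) :
    Ioo a b ⊆ Icc x y \ A := fun _ hp =>
  ⟨Icc_subset_Icc (hA h.left_mem).1 (hA h.right_mem).2 (Ioo_subset_Icc_self hp), h.notMem hp⟩

variable [LinearOrder β] {τ : α → β}

theorem image (h : IsGap A a b) (hτ : StrictMonoOn τ A) : IsGap (τ '' A) (τ a) (τ b) where
  left_mem := mem_image_of_mem τ h.left_mem
  right_mem := mem_image_of_mem τ h.right_mem
  lt := hτ h.left_mem h.right_mem h.lt
  disjoint := by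
    refine disjoint_left.2 ?_
    rintro _ hs ⟨q, hq, rfl⟩
    exact h.notMem ⟨(hτ.lt_iff_lt h.left_mem hq).1 hs.1, (hτ.lt_iff_lt hq h.right_mem).1 hs.2⟩ hq

theorem exists_of_image {c d : β} (h : IsGap (τ '' A) c d) (hτ : StrictMonoOn τ A) :
    ∃ a b, IsGap A a b ∧ τ a = c ∧ τ b = d := by
  obtain ⟨a, ha, rfl⟩ := h.left_mem
  obtain ⟨b, hb, rfl⟩ := h.right_mem
  refine ⟨a, b, ⟨ha, hb, (hτ.lt_iff_lt ha hb).1 h.lt, disjoint_left.2 fun q hq hqA => ?_⟩, rfl, rfl⟩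
  exact h.notMem ⟨hτ ha hqA hq.1, hτ hqA hb hq.2⟩ (mem_image_of_mem τ hqA)

end IsGap

theorem exists_isGap_of_notMem {α : Type*} [ConditionallyCompleteLinearOrder α]
    [TopologicalSpace α] [OrderTopology α] {A : Set α} {x y p : α} (hA : IsClosed A)
    (hx : x ∈ A) (hy : y ∈ A) (hp : p ∈ Icc x y) (hpA : p ∉ A) :
    ∃ a b, IsGap A a b ∧ p ∈ Ioo a b := by
  have hbddL : BddAbove (A ∩ Iic p) := ⟨p, fun _ hs => hs.2⟩
  have hbddR : BddBelow (A ∩ Ici p) := ⟨p, fun _ hs => hs.2⟩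
  have hL := (hA.inter isClosed_Iic).csSup_mem ⟨x, hx, hp.1⟩ hbddL
  have hR := (hA.inter isClosed_Ici).csInf_mem ⟨y, hy, hp.2⟩ hbddR
  have hLp : sSup (A ∩ Iic p) < p := hL.2.lt_of_ne fun h => hpA (h ▸ hL.1)
  have hpR : p < sInf (A ∩ Ici p) := hR.2.lt_of_ne' fun h => hpA (h ▸ hR.1)
  refine ⟨_, _, ⟨hL.1, hR.1, hLp.trans hpR, disjoint_left.2 fun s hs hsA => ?_⟩, hLp, hpR⟩
  rcases le_total s p with hsp | hps
  · exact (le_csSup hbddL ⟨hsA, hsp⟩).not_gt hs.1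
  · exact (csInf_le hbddR ⟨hsA, hps⟩).not_gt hs.2

end Gap

section GapExtension

variable {α β : Type*} [LinearOrder α] {A : Set α} {τ h : α → β}

open scoped Classical in
noncomputable def gapGlue (A : Set α) (τ : α → β) (k : α → α → α → β) (p : α) : β :=
  if H : ∃ ab : α × α, IsGap A ab.1 ab.2 ∧ p ∈ Ioo ab.1 ab.2 then k H.choose.1 H.choose.2 p
  else τ p

theorem gapGlue_of_mem {k : α → α → α → β} {p : α} (hp : p ∈ A) : gapGlue A τ k p = τ p :=
  dif_neg fun ⟨_, hab, hp'⟩ => hab.notMem hp' hp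

theorem gapGlue_of_isGap {k : α → α → α → β} {a b : α} (hab : IsGap A a b) :
    EqOn (gapGlue A τ k) (k a b) (Ioo a b) := by
  intro p hp
  have H : ∃ ab : α × α, IsGap A ab.1 ab.2 ∧ p ∈ Ioo ab.1 ab.2 := ⟨(a, b), hab, hp⟩
  obtain ⟨ha, hb⟩ := H.choose_spec.1.eq_of_mem_Ioo hab H.choose_spec.2 hp
  rw [gapGlue, dif_pos H, ha, hb]

variable [LinearOrder β]

structure IsGapExtension (A : Set α) (τ h : α → β) : Prop where
  eqOn : EqOn h τ A
  strictMonoOn_Ioo : ∀ ⦃a b⦄, IsGap A a b → StrictMonoOn h (Ioo a b)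
  image_Ioo : ∀ ⦃a b⦄, IsGap A a b → h '' Ioo a b = Ioo (τ a) (τ b)

theorem isGapExtension_gapGlue {k : α → α → α → β}
    (hk : ∀ a b, IsGap A a b → StrictMonoOn (k a b) (Ioo a b) ∧
      k a b '' Ioo a b = Ioo (τ a) (τ b)) :
    IsGapExtension A τ (gapGlue A τ k) where
  eqOn _ hp := gapGlue_of_mem hp
  strictMonoOn_Ioo a b hab := (hk a b hab).1.congr (gapGlue_of_isGap hab).symm
  image_Ioo a b hab := (gapGlue_of_isGap hab).image_eq.trans (hk a b hab).2

theorem IsGapExtension.mapsTo_Ioo (he : IsGapExtension A τ h) {a b : α} (hab : IsGap A a b) :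
    MapsTo h (Ioo a b) (Ioo (τ a) (τ b)) :=
  he.image_Ioo hab ▸ mapsTo_image h _

end GapExtension

section GapExtensionIcc

variable {α β : Type*} [ConditionallyCompleteLinearOrder α] [TopologicalSpace α] [OrderTopology α]
  {A : Set α} {τ h : α → β} {x y : α}

theorem IsGapExtension.strictMonoOn_Icc [LinearOrder β] (he : IsGapExtension A τ h)
    (hτ : StrictMonoOn τ A) (hA : IsClosed A) (hx : x ∈ A) (hy : y ∈ A) :
    StrictMonoOn h (Icc x y) := by
  intro p hp q hq hpq
  by_cases hqA : q ∈ A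
  · rw [he.eqOn hqA]
    by_cases hpA : p ∈ A
    · rw [he.eqOn hpA]
      exact hτ hpA hqA hpq
    · obtain ⟨a, b, hab, hp'⟩ := exists_isGap_of_notMem hA hx hy hp hpA
      exact (he.mapsTo_Ioo hab hp').2.trans_le
        (hτ.monotoneOn hab.right_mem hqA (hab.right_le_of_lt hqA hpq hp'))
  obtain ⟨a', b', hab', hq'⟩ := exists_isGap_of_notMem hA hx hy hq hqA
  by_cases hpA : p ∈ A
  · calc h p = τ p := he.eqOn hpA
      _ ≤ τ a' := hτ.monotoneOn hpA hab'.left_mem (hab'.le_left_of_lt hpA hpq hq')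
      _ < h q := (he.mapsTo_Ioo hab' hq').1
  obtain ⟨a, b, hab, hp'⟩ := exists_isGap_of_notMem hA hx hy hp hpA
  rcases lt_or_ge q b with hqb | hbq
  · exact he.strictMonoOn_Ioo hab hp' ⟨hp'.1.trans hpq, hqb⟩ hpq
  have hbq : b < q := hbq.lt_of_ne fun hbq => hqA (hbq ▸ hab.right_mem)
  calc h p < τ b := (he.mapsTo_Ioo hab hp').2
    _ ≤ τ a' := hτ.monotoneOn hab.right_mem hab'.left_mem
        (hab'.le_left_of_lt hab.right_mem hbq hq')
    _ < h q := (he.mapsTo_Ioo hab' hq').1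

theorem IsGapExtension.image_Icc [ConditionallyCompleteLinearOrder β] [TopologicalSpace β]
    [OrderTopology β] {B : Set β} {u v : β} (he : IsGapExtension A τ h)
    (hτ : StrictMonoOn τ A) (hτB : τ '' A = B) (hA : IsClosed A) (hAxy : A ⊆ Icc x y)
    (hx : x ∈ A) (hy : y ∈ A) (hB : IsClosed B) (hBuv : B ⊆ Icc u v) (hu : u ∈ B)
    (hv : v ∈ B) : h '' Icc x y = Icc u v := by
  subst hτB
  refine Subset.antisymm ?_ fun w hw => ?_
  · rintro _ ⟨p, hp, rfl⟩
    by_cases hpA : p ∈ A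
    · rw [he.eqOn hpA]
      exact hBuv (mem_image_of_mem τ hpA)
    · obtain ⟨a, b, hab, hp'⟩ := exists_isGap_of_notMem hA hx hy hp hpA
      exact ((hab.image hτ).Ioo_subset_diff hBuv (he.mapsTo_Ioo hab hp')).1
  by_cases hwB : w ∈ τ '' A
  · obtain ⟨p, hp, rfl⟩ := hwB
    exact ⟨p, hAxy hp, he.eqOn hp⟩
  obtain ⟨c, d, hcd, hw'⟩ := exists_isGap_of_notMem hB hu hv hw hwB
  obtain ⟨a, b, hab, rfl, rfl⟩ := hcd.exists_of_image hτ
  obtain ⟨p, hp, rfl⟩ : w ∈ h '' Ioo a b := he.image_Ioo hab ▸ hw'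
  exact ⟨p, (hab.Ioo_subset_diff hAxy hp).1, rfl⟩

end GapExtensionIcc

section Interval

variable {α β : Type*} [ConditionallyCompleteLinearOrder α] [TopologicalSpace α]
  [OrderTopology α] [DenselyOrdered α] [LinearOrder β] [TopologicalSpace β]
  [OrderClosedTopology β] {f : α → β} {a b : α} {c d : β}

theorem image_Ioo_of_tendsto (hab : a < b) (hf : ContinuousOn f (Ioo a b))
    (hmono : StrictMonoOn f (Ioo a b)) (ha : Tendsto f (𝓝[>] a) (𝓝 c))
    (hb : Tendsto f (𝓝[<] b) (𝓝 d)) : f '' Ioo a b = Ioo c d := by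
  have := nhdsGT_neBot_of_exists_gt ⟨b, hab⟩
  have := nhdsLT_neBot_of_exists_lt ⟨a, hab⟩
  refine Subset.antisymm ?_ (isPreconnected_Ioo.intermediate_value_Ioo
    (le_principal_iff.2 (Ioo_mem_nhdsGT hab)) (le_principal_iff.2 (Ioo_mem_nhdsLT hab)) hf ha hb)
  rintro _ ⟨p, hp, rfl⟩
  obtain ⟨q, hq⟩ := exists_between hp.1
  obtain ⟨r, hr⟩ := exists_between hp.2
  have hq' : q ∈ Ioo a b := ⟨hq.1, hq.2.trans hp.2⟩
  have hr' : r ∈ Ioo a b := ⟨hp.1.trans hr.1, hr.2⟩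
  refine ⟨(le_of_tendsto ha ?_).trans_lt (hmono hq' hp hq.2),
    (hmono hp hr' hr.1).trans_le (ge_of_tendsto hb ?_)⟩
  · filter_upwards [Ioo_mem_nhdsGT hq.1] with z hz
    exact (hmono ⟨hz.1, hz.2.trans hq'.2⟩ hq' hz.2).le
  · filter_upwards [Ioo_mem_nhdsLT hr.2] with z hz
    exact (hmono hr' ⟨hr'.1.trans hz.1, hz.2⟩ hz.1).le

theorem image_Ioo_of_tendsto_of_strictAntiOn (hab : a < b) (hf : ContinuousOn f (Ioo a b))
    (hanti : StrictAntiOn f (Ioo a b)) (ha : Tendsto f (𝓝[>] a) (𝓝 c))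
    (hb : Tendsto f (𝓝[<] b) (𝓝 d)) : f '' Ioo a b = Ioo d c := by
  have := image_Ioo_of_tendsto (β := βᵒᵈ) hab hf hanti.dual_right ha hb
  ext w
  exact (Set.ext_iff.1 this (OrderDual.toDual w)).trans and_comm

end Interval

theorem StrictMonoOn.image_Ioo_eq {α β : Type*} [LinearOrder α] [LinearOrder β] {f : α → β}
    {s : Set α} {t : Set β} [s.OrdConnected] [t.OrdConnected] (hf : StrictMonoOn f s)
    (hst : f '' s = t) {c d : α} (hc : c ∈ s) (hd : d ∈ s) :
    f '' Ioo c d = Ioo (f c) (f d) := by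
  have hcd : Ioo c d ⊆ s := Ioo_subset_Icc_self.trans (OrdConnected.out ‹_› hc hd)
  refine Subset.antisymm ?_ fun w hw => ?_
  · rintro _ ⟨p, hp, rfl⟩
    exact ⟨hf hc (hcd hp) hp.1, hf (hcd hp) hd hp.2⟩
  have hwt : w ∈ t := OrdConnected.out ‹_› (hst ▸ mem_image_of_mem f hc)
    (hst ▸ mem_image_of_mem f hd) (Ioo_subset_Icc_self hw)
  obtain ⟨p, hp, rfl⟩ := hst ▸ hwt
  exact ⟨p, ⟨(hf.lt_iff_lt hc hp).1 hw.1, (hf.lt_iff_lt hp hd).1 hw.2⟩, rfl⟩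

theorem exists_strictMonoOn_image_Ioo {K : Type*} [Field K] [LinearOrder K]
    [IsStrictOrderedRing K] {a b c d : K} (hab : a < b) (hcd : c < d) :
    ∃ k : K → K, StrictMonoOn k (Ioo a b) ∧ k '' Ioo a b = Ioo c d := by
  have hr : 0 < (d - c) / (b - a) := div_pos (sub_pos.2 hcd) (sub_pos.2 hab)
  refine ⟨fun p => (d - c) / (b - a) * p + (c - (d - c) / (b - a) * a),
    ((strictMono_mul_left_of_pos hr).add_const _).strictMonoOn _, ?_⟩
  rw [image_affine_Ioo hr]
  congr 1
  · ring
  · field_simp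
    ring

section Conjugate

variable {α β γ : Type*} [LinearOrder α] [LinearOrder β] [Nonempty β] [LinearOrder γ]
  {s : Set α} {t : Set β} {φ : α → γ} {g : β → γ}

theorem exists_strictMonoOn_comp_eq (hφ : StrictMonoOn φ s) (hg : StrictMonoOn g t)
    (hst : φ '' s = g '' t) :
    ∃ k : α → β, StrictMonoOn k s ∧ k '' s = t ∧ ∀ p ∈ s, g (k p) = φ p := by
  have hk : ∀ p ∈ s, Function.invFunOn g t (φ p) ∈ t ∧ g (Function.invFunOn g t (φ p)) = φ p :=
    fun p hp => have h : φ p ∈ g '' t := hst ▸ mem_image_of_mem φ hp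
      ⟨Function.invFunOn_mem h, Function.invFunOn_eq h⟩
  refine ⟨fun p => Function.invFunOn g t (φ p), fun p hp q hq hpq => ?_, ?_,
    fun p hp => (hk p hp).2⟩
  · rw [← hg.lt_iff_lt (hk p hp).1 (hk q hq).1, (hk p hp).2, (hk q hq).2]
    exact hφ hp hq hpq
  refine Subset.antisymm (image_subset_iff.2 fun p hp => (hk p hp).1) fun r hr => ?_
  obtain ⟨p, hp, hpr⟩ : g r ∈ φ '' s := hst ▸ mem_image_of_mem g hr
  exact ⟨p, hp, hg.injOn (hk p hp).1 hr ((hk p hp).2.trans hpr)⟩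

theorem exists_strictMonoOn_comp_eq_of_strictAntiOn (hφ : StrictAntiOn φ s)
    (hg : StrictAntiOn g t) (hst : φ '' s = g '' t) :
    ∃ k : α → β, StrictMonoOn k s ∧ k '' s = t ∧ ∀ p ∈ s, g (k p) = φ p :=
  exists_strictMonoOn_comp_eq (γ := γᵒᵈ) hφ.dual_right hg.dual_right hst

end Conjugate

theorem exists_lift_on_Ioo {a b a' b' c d : ℝ} {f g h : ℝ → ℝ} {s t : Set ℝ} [s.OrdConnected]
    [t.OrdConnected] (hab : a < b) (hab' : a' < b') (hf : ContinuousOn f (Ioo a b))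
    (hfm : StrictMonoOn f (Ioo a b) ∨ StrictAntiOn f (Ioo a b))
    (hfa : Tendsto f (𝓝[>] a) (𝓝 c)) (hfb : Tendsto f (𝓝[<] b) (𝓝 d))
    (hg : ContinuousOn g (Ioo a' b'))
    (hgm : StrictMonoOn g (Ioo a' b') ∨ StrictAntiOn g (Ioo a' b'))
    (hga : Tendsto g (𝓝[>] a') (𝓝 (h c))) (hgb : Tendsto g (𝓝[<] b') (𝓝 (h d)))
    (hh : StrictMonoOn h s) (hst : h '' s = t) (hc : c ∈ s) (hd : d ∈ s) :
    ∃ k, StrictMonoOn k (Ioo a b) ∧ k '' Ioo a b = Ioo a' b' ∧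
      ∀ p ∈ Ioo a b, g (k p) = h (f p) := by
  have lt_of_image_eq : ∀ {φ : ℝ → ℝ} {a b c d : ℝ}, a < b → φ '' Ioo a b = Ioo c d → c < d :=
    fun hab h => nonempty_Ioo.1 (h ▸ (nonempty_Ioo.2 hab).image _)
  have hsub : ∀ {c d}, c ∈ s → d ∈ s → Ioo c d ⊆ s :=
    fun hc hd => Ioo_subset_Icc_self.trans (OrdConnected.out ‹_› hc hd)
  rcases hfm with hfm | hfm
  · have hfimg := image_Ioo_of_tendsto hab hf hfm hfa hfb
    have hcd := lt_of_image_eq hab hfimg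
    have hgm : StrictMonoOn g (Ioo a' b') := hgm.resolve_right fun hgm =>
      (lt_of_image_eq hab' (image_Ioo_of_tendsto_of_strictAntiOn hab' hg hgm hga hgb)).not_gt
        (hh hc hd hcd)
    refine exists_strictMonoOn_comp_eq
      (hh.comp hfm ((hfimg ▸ mapsTo_image f _).mono_right (hsub hc hd))) hgm ?_
    rw [← image_image, hfimg, hh.image_Ioo_eq hst hc hd, image_Ioo_of_tendsto hab' hg hgm hga hgb]
  · have hfimg := image_Ioo_of_tendsto_of_strictAntiOn hab hf hfm hfa hfb
    have hdc := lt_of_image_eq hab hfimg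
    have hgm : StrictAntiOn g (Ioo a' b') := hgm.resolve_left fun hgm =>
      (lt_of_image_eq hab' (image_Ioo_of_tendsto hab' hg hgm hga hgb)).not_gt (hh hd hc hdc)
    refine exists_strictMonoOn_comp_eq_of_strictAntiOn
      (hh.comp_strictAntiOn hfm ((hfimg ▸ mapsTo_image f _).mono_right (hsub hd hc))) hgm ?_
    rw [← image_image, hfimg, hh.image_Ioo_eq hst hd hc,
      image_Ioo_of_tendsto_of_strictAntiOn hab' hg hgm hga hgb]

theorem exists_extension_of_strictMonoOn {x y u v : ℝ} {A B : Set ℝ} {τ : ℝ → ℝ}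
    (hA : IsClosed A) (hAxy : A ⊆ Icc x y) (hx : x ∈ A) (hy : y ∈ A) (hB : IsClosed B)
    (hBuv : B ⊆ Icc u v) (hu : u ∈ B) (hv : v ∈ B) (hτ : StrictMonoOn τ A)
    (hτB : τ '' A = B) :
    ∃ h, StrictMonoOn h (Icc x y) ∧ h '' Icc x y = Icc u v ∧ EqOn h τ A := by
  choose! k hk using fun a b (hab : IsGap A a b) =>
    exists_strictMonoOn_image_Ioo hab.lt (hτ hab.left_mem hab.right_mem hab.lt)
  have he := isGapExtension_gapGlue hk
  exact ⟨_, he.strictMonoOn_Icc hτ hA hx hy,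
    he.image_Icc hτ hτB hA hAxy hx hy hB hBuv hu hv, he.eqOn⟩

theorem exists_lift_of_markovPair {x' y' x y u' v' u v : ℝ} {f g h τ τ' : ℝ → ℝ} {A' A B' B : Set ℝ}
    (hMf : MarkovPair x' y' x y f A' A) (hMg : MarkovPair u' v' u v g B' B)
    (hτ' : StrictMonoOn τ' A') (hτ'B : τ' '' A' = B')
    (hfg : ∀ a ∈ A', ∀ t ∈ A, f a = t → g (τ' a) = τ t)
    (hlim : ∀ a b, a ∈ A' → b ∈ A' → a < b → Ioo a b ⊆ Icc x' y' \ A' → ∀ c ∈ A,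
      (Tendsto f (𝓝[>] a) (𝓝 c) → Tendsto g (𝓝[>] (τ' a)) (𝓝 (τ c))) ∧
      (Tendsto f (𝓝[<] b) (𝓝 c) → Tendsto g (𝓝[<] (τ' b)) (𝓝 (τ c))))
    (hh : StrictMonoOn h (Icc x y)) (hhimg : h '' Icc x y = Icc u v) (hhτ : EqOn h τ A) :
    ∃ h', (StrictMonoOn h' (Icc x' y') ∧ h' '' Icc x' y' = Icc u' v' ∧ EqOn h' τ' A') ∧
      ∀ p ∈ Icc x' y', g (h' p) = h (f p) := by
  obtain ⟨hA'c, -, hA', hx', hy', -, -, hA, -, -, hfA, hfgap⟩ := hMf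
  obtain ⟨hB'c, -, hB', hu', hv', -, -, -, -, -, -, hggap⟩ := hMg
  have hk : ∀ a b, IsGap A' a b → ∃ k, StrictMonoOn k (Ioo a b) ∧
      k '' Ioo a b = Ioo (τ' a) (τ' b) ∧ ∀ p ∈ Ioo a b, g (k p) = h (f p) := by
    intro a b hab
    have hsub := hab.Ioo_subset_diff hA'
    obtain ⟨hfc, hfm, ⟨c, hc, hfa⟩, ⟨d, hd, hfb⟩⟩ :=
      hfgap a b hab.left_mem hab.right_mem hab.lt hsub
    have hab' : IsGap B' (τ' a) (τ' b) := hτ'B ▸ hab.image hτ'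
    obtain ⟨hgc, hgm, -, -⟩ :=
      hggap _ _ hab'.left_mem hab'.right_mem hab'.lt (hab'.Ioo_subset_diff hB')
    have hga := (hlim a b hab.left_mem hab.right_mem hab.lt hsub c hc).1 hfa
    have hgb := (hlim a b hab.left_mem hab.right_mem hab.lt hsub d hd).2 hfb
    rw [← hhτ hc] at hga
    rw [← hhτ hd] at hgb
    exact exists_lift_on_Ioo hab.lt hab'.lt hfc hfm hfa hfb hgc hgm hga hgb hh hhimg
      (hA hc) (hA hd)
  choose! k hk using hk
  have he := isGapExtension_gapGlue (τ := τ') fun a b hab => ⟨(hk a b hab).1, (hk a b hab).2.1⟩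
  refine ⟨gapGlue A' τ' k, ⟨he.strictMonoOn_Icc hτ' hA'c hx' hy',
    he.image_Icc hτ' hτ'B hA'c hA' hx' hy' hB'c hB' hu' hv', he.eqOn⟩, fun p hp => ?_⟩
  by_cases hpA : p ∈ A'
  · rw [he.eqOn hpA, hfg p hpA _ (hfA hpA) rfl, hhτ (hfA hpA)]
  obtain ⟨a, b, hab, hp'⟩ := exists_isGap_of_notMem hA'c hx' hy' hp hpA
  rw [gapGlue_of_isGap hab hp']
  exact (hk a b hab).2.2 p hp'

theorem strictMonoOn_bijOn_of_comp_eq {α β : Type*} [LinearOrder α] [LinearOrder β]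
    {A A' : Set α} {B B' : Set β} {φ : α → α} {ψ : β → β} {τ τ' : α → β}
    (hτ : StrictMonoOn τ A) (hτB : BijOn τ A B) (hφ : StrictMonoOn φ A') (hφA : BijOn φ A' A)
    (hψ : StrictMonoOn ψ B') (hψB : BijOn ψ B' B) (hτ' : MapsTo τ' A' B')
    (hcomm : ∀ a ∈ A', ψ (τ' a) = τ (φ a)) : StrictMonoOn τ' A' ∧ BijOn τ' A' B' := by
  have hmono : StrictMonoOn τ' A' := fun p hp q hq hpq => by
    rw [← hψ.lt_iff_lt (hτ' hp) (hτ' hq), hcomm p hp, hcomm q hq]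
    exact hτ (hφA.mapsTo hp) (hφA.mapsTo hq) (hφ hp hq hpq)
  refine ⟨hmono, hτ', hmono.injOn, fun w hw => ?_⟩
  obtain ⟨z, hz, hτz⟩ := hτB.surjOn (hψB.mapsTo hw)
  obtain ⟨p, hp, rfl⟩ := hφA.surjOn hz
  exact ⟨p, hp, hψB.injOn (hτ' hp) hw ((hcomm p hp).trans hτz)⟩

theorem exists_seq_of_forall_exists_succ {α : Type*} {P : ℕ → α → Prop}
    {R : ℕ → α → α → Prop} (h₀ : ∃ a, P 0 a) (hs : ∀ n a, P n a → ∃ b, P (n + 1) b ∧ R n a b) :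
    ∃ s : ℕ → α, ∀ n, P n (s n) ∧ R n (s n) (s (n + 1)) := by
  choose a₀ ha₀ using h₀
  choose next hnext using hs
  let s : ∀ n, {a // P n a} :=
    fun n => Nat.rec ⟨a₀, ha₀⟩ (fun n a => ⟨next n a a.2, (hnext n a a.2).1⟩) n
  exact ⟨fun n => (s n).1, fun n => ⟨(s n).2, (hnext n _ (s n).2).2⟩⟩

theorem nonempty_homeomorph_inverseLimit {α β : Type*} [LinearOrder α] [TopologicalSpace α]
    [OrderTopology α] [LinearOrder β] [TopologicalSpace β] [OrderTopology β]
    {x y : ℕ → α} {u v : ℕ → β} {f : ℕ → α → α} {g : ℕ → β → β} {h : ℕ → α → β}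
    (hf : ∀ n, MapsTo (f n) (Icc (x (n + 1)) (y (n + 1))) (Icc (x n) (y n)))
    (hh : ∀ n, StrictMonoOn (h n) (Icc (x n) (y n)))
    (himg : ∀ n, h n '' Icc (x n) (y n) = Icc (u n) (v n))
    (hconj : ∀ n, ∀ p ∈ Icc (x (n + 1)) (y (n + 1)), g n (h (n + 1) p) = h n (f n p)) :
    Nonempty ({p : ∀ n, Icc (x n) (y n) // ∀ n, (p n : α) = f n (p (n + 1))} ≃ₜ
      {q : ∀ n, Icc (u n) (v n) // ∀ n, (q n : β) = g n (q (n + 1))}) := by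
  let E n : Icc (x n) (y n) ≃ₜ Icc (u n) (v n) :=
    (((hh n).orderIso _ _).trans (OrderIso.setCongr _ _ (himg n))).toHomeomorph
  refine ⟨(Homeomorph.piCongrRight E).subtype fun p => forall_congr' fun n => ?_⟩
  change _ ↔ h n (p n) = g n (h (n + 1) (p (n + 1)))
  rw [hconj n _ (p (n + 1)).2]
  exact ((hh n).injOn.eq_iff (p n).2 (hf n (p (n + 1)).2)).symm

theorem stmt_15_general
    (x y u v : ℕ → ℝ)
    (f g : ℕ → ℝ → ℝ)
    (hfmaps : ∀ n, Set.MapsTo (f n) (Set.Icc (x (n+1)) (y (n+1))) (Set.Icc (x n) (y n)))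
    (A B : ℕ → Set ℝ)
    (hpattern : FollowSamePattern x y u v f g A B) :
    Nonempty
      (({p : ∀ n : ℕ, Set.Icc (x n) (y n) // ∀ n, (p n : ℝ) = f n (p (n+1))}) ≃ₜ
       ({q : ∀ n : ℕ, Set.Icc (u n) (v n) // ∀ n, (q n : ℝ) = g n (q (n+1))})) := by
  obtain ⟨hMf, hMg, τ, φ, ψ, hτ₀, hτ₀B, hφ, hψ, hτmaps, hcomm, hfg, hlim⟩ := hpattern
  have hτ : ∀ n, StrictMonoOn (τ n) (A n) ∧ BijOn (τ n) (A n) (B n) := fun n =>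
    Nat.rec ⟨hτ₀, hτ₀B⟩ (fun n ih => strictMonoOn_bijOn_of_comp_eq ih.1 ih.2 (hφ n).1 (hφ n).2
      (hψ n).1 (hψ n).2 (hτmaps n) (hcomm n)) n
  obtain ⟨-, -, -, -, -, hA₀, -, hA₀I, hx₀, hy₀, -⟩ := hMf 0
  obtain ⟨-, -, -, -, -, hB₀, -, hB₀I, hu₀, hv₀, -⟩ := hMg 0
  obtain ⟨h, hh⟩ := exists_seq_of_forall_exists_succ
    (P := fun n h => StrictMonoOn h (Icc (x n) (y n)) ∧ h '' Icc (x n) (y n) = Icc (u n) (v n) ∧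
      EqOn h (τ n) (A n))
    (R := fun n h h' => ∀ p ∈ Icc (x (n + 1)) (y (n + 1)), g n (h' p) = h (f n p))
    (exists_extension_of_strictMonoOn hA₀ hA₀I hx₀ hy₀ hB₀ hB₀I hu₀ hv₀ (hτ 0).1
      (hτ 0).2.image_eq)
    fun n _ ⟨hmono, himg, heq⟩ => exists_lift_of_markovPair (hMf n) (hMg n) (hτ (n + 1)).1
      (hτ (n + 1)).2.image_eq (fun a ha t ht => (hfg n a ha t ht).1)
      (fun a b ha hb hab hsub c hc =>
        ⟨(hlim n a b ha hb hab hsub c hc).1.1, (hlim n a b ha hb hab hsub c hc).2.1⟩)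
      hmono himg heq
  exact nonempty_homeomorph_inverseLimit hfmaps (fun n => (hh n).1.1) (fun n => (hh n).1.2.1)
    fun n => (hh n).2

/-- two inverse sequences of closed intervals and single-valued quasi
Markov bonding functions that follow the same pattern have homeomorphic inverse
limits. -/
theorem stmt_15
    (x y u v : ℕ → ℝ) (hxy : ∀ n, x n < y n) (huv : ∀ n, u n < v n)
    (f g : ℕ → ℝ → ℝ)
    (hfmaps : ∀ n, Set.MapsTo (f n) (Set.Icc (x (n+1)) (y (n+1))) (Set.Icc (x n) (y n)))
    (hgmaps : ∀ n, Set.MapsTo (g n) (Set.Icc (u (n+1)) (v (n+1))) (Set.Icc (u n) (v n)))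
    (A B : ℕ → Set ℝ)
    (hpattern : FollowSamePattern x y u v f g A B) :
    Nonempty
      (({p : ∀ n : ℕ, Set.Icc (x n) (y n) // ∀ n, (p n : ℝ) = f n (p (n+1))}) ≃ₜ
       ({q : ∀ n : ℕ, Set.Icc (u n) (v n) // ∀ n, (q n : ℝ) = g n (q (n+1))})) :=
  stmt_15_general x y u v f g hfmaps A B hpattern
end
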